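/- arXiv:2112.06332 — 2 statements merged into one kernel-verified Lean document; each statement's English description precedes it below -/
import Mathlib

section
/- Let T ≤ SL₂(ℂ) be the subgroup of diagonal matrices, let 𝒦 = {z ∈ ℂ : Re z ≥ −1/2} \ {z ∈ ℂ : Re z = −1/2 and Im z < 0}, and for α ∈ ℂ let g_α = [[1, α],[1, 1+α]] ∈ SL₂(ℂ). For h ∈ SL₂(ℂ) write hTh⁻¹ for the set {h t h⁻¹ : t ∈ T}. Then for all g₁, g₂ ∈ SL₂(ℂ) exactly one of the following holds: (i) there exists A ∈ SL₂(ℂ) such that (A g₁) T (A g₁)⁻¹ = T and (A g₂) T (A g₂)⁻¹ = T; (ii) there exists a unique α ∈ 𝒦 such that for some A ∈ SL₂(ℂ), (A g₁) T (A g₁)⁻¹ = g_α T g_α⁻¹ and (A g₂) T (A g₂)⁻¹ = T. (Thus the pairs (T, T) and (g_α T g_α⁻¹, T), α ∈ 𝒦, form a minimal set of representatives of the orbits of pairs of maximal tori of SL₂(ℂ) under simultaneous conjugation.) -/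
/-!
Put `h = g₂⁻¹ g₁` and let `N` be the normalizer of `T`, i.e. the diagonal and antidiagonal
matrices. The first alternative says `h ∈ N`, the second that `h ∈ N g_α N`.
The product of the four entries of a matrix is unchanged by multiplication by `N` on either side
and equals `α (1 + α)` at `g_α`; since `α (1 + α) = β (1 + β)` means `β ∈ {α, -1 - α}` and `𝒦` is
a fundamental domain for `z ↦ -1 - z`, at most one `α ∈ 𝒦` occurs. Conversely, diagonal matrices
on both sides bring any `h = [[a, b], [c, d]] ∉ N` with `a c ≠ 0` to `g_{bc}`, a Weyl element
reduces the remaining case to this one, and `g_β ∈ N g_{-1-β} N`, so one of the two candidates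
lies in `𝒦`.
-/

open Matrix

/-- The diagonal torus `T ≤ SL₂(ℂ)`. -/
def Tdiag : Set (SpecialLinearGroup (Fin 2) ℂ) :=
  {t | (t : Matrix (Fin 2) (Fin 2) ℂ) 0 1 = 0 ∧ (t : Matrix (Fin 2) (Fin 2) ℂ) 1 0 = 0}

/-- The conjugate `h S h⁻¹` of a subset `S ⊆ SL₂(ℂ)`. -/
def conjSet (h : SpecialLinearGroup (Fin 2) ℂ) (S : Set (SpecialLinearGroup (Fin 2) ℂ)) :
    Set (SpecialLinearGroup (Fin 2) ℂ) :=
  (fun t => h * t * h⁻¹) '' S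

/-- `𝒦 = {z : Re z ≥ -1/2} \ {z : Re z = -1/2, Im z < 0}`. -/
def Kflat : Set ℂ :=
  {z : ℂ | -(1 / 2) ≤ z.re} \ {z : ℂ | z.re = -(1 / 2) ∧ z.im < 0}

/-- `g_α = [[1, α],[1, 1+α]] ∈ SL₂(ℂ)`. -/
def gMat (α : ℂ) : SpecialLinearGroup (Fin 2) ℂ :=
  ⟨!![1, α; 1, 1 + α], by rw [Matrix.det_fin_two_of]; ring⟩

open Subgroup DoubleCoset
open scoped MatrixGroups

section Group

variable {G : Type*} [Group G]

theorem image_conj_eq_self_iff_mem_normalizer {S : Set G} {g : G} :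
    (fun t => g * t * g⁻¹) '' S = S ↔ g ∈ normalizer S := by
  rw [mem_set_normalizer_iff]
  constructor
  · intro hg n
    refine ⟨fun hn => hg ▸ ⟨n, hn, rfl⟩, fun hn => ?_⟩
    obtain ⟨t, ht, hgt⟩ := hg.symm ▸ hn
    rw [mul_left_inj, mul_right_inj] at hgt
    exact hgt ▸ ht
  · intro hg
    ext x
    refine ⟨fun ⟨t, ht, hx⟩ => hx ▸ (hg t).1 ht, fun hx => ⟨g⁻¹ * x * g, ?_, by group⟩⟩
    rw [hg]
    simpa [mul_assoc] using hx

theorem image_conj_eq_image_conj_iff {S : Set G} {g k : G} :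
    (fun t => g * t * g⁻¹) '' S = (fun t => k * t * k⁻¹) '' S ↔ k⁻¹ * g ∈ normalizer S := by
  have hconj : (fun t => g * t * g⁻¹) =
      (fun t => k * t * k⁻¹) ∘ (fun t => k⁻¹ * g * t * (k⁻¹ * g)⁻¹) := by
    ext t
    simp only [Function.comp_apply]
    group
  have hinj : Function.Injective (fun t => k * t * k⁻¹) := fun a b hab => by simpa using hab
  rw [hconj, Set.image_comp, (Set.image_injective.2 hinj).eq_iff,
    image_conj_eq_self_iff_mem_normalizer]

variable {H K : Subgroup G} {a g : G}

theorem mem_doubleCoset_of_mul_mem {x y : G} (hx : x ∈ H) (hy : y ∈ K)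
    (hxgy : x * g * y ∈ doubleCoset a H K) : g ∈ doubleCoset a H K := by
  rw [← doubleCoset_eq_of_mem hxgy]
  exact mem_doubleCoset.2 ⟨x⁻¹, inv_mem hx, y⁻¹, inv_mem hy, by group⟩

theorem mem_of_mem_doubleCoset_of_mem (hg : g ∈ H) (hga : g ∈ doubleCoset a H H) : a ∈ H := by
  obtain ⟨x, hx, y, hy, rfl⟩ := mem_doubleCoset.1 hga
  simpa [mul_assoc] using mul_mem (mul_mem (inv_mem hx) hg) (inv_mem hy)

end Group

theorem exists_conjSet_eq_self_iff {S : Set SL(2, ℂ)} (g₁ g₂ : SL(2, ℂ)) :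
    (∃ A, conjSet (A * g₁) S = S ∧ conjSet (A * g₂) S = S) ↔ g₂⁻¹ * g₁ ∈ normalizer S := by
  simp only [conjSet, image_conj_eq_self_iff_mem_normalizer]
  constructor
  · rintro ⟨A, h₁, h₂⟩
    simpa [mul_assoc] using mul_mem (inv_mem h₂) h₁
  · intro h
    exact ⟨g₂⁻¹, h, by simp⟩

theorem exists_conjSet_eq_conjSet_iff {S : Set SL(2, ℂ)} (a g₁ g₂ : SL(2, ℂ)) :
    (∃ A, conjSet (A * g₁) S = conjSet a S ∧ conjSet (A * g₂) S = S) ↔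
      g₂⁻¹ * g₁ ∈ doubleCoset a (normalizer S) (normalizer S) := by
  simp only [conjSet, image_conj_eq_self_iff_mem_normalizer, image_conj_eq_image_conj_iff,
    mem_doubleCoset]
  constructor
  · rintro ⟨A, h₁, h₂⟩
    exact ⟨(A * g₂)⁻¹, inv_mem h₂, a⁻¹ * (A * g₁), h₁, by group⟩
  · rintro ⟨x, hx, y, hy, hxy⟩
    refine ⟨x⁻¹ * g₂⁻¹, ?_, by simpa using inv_mem hx⟩
    rwa [show a⁻¹ * (x⁻¹ * g₂⁻¹ * g₁) = y by rw [mul_assoc x⁻¹, hxy]; group]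

namespace SL2

variable {g n : SL(2, ℂ)}

theorem det_eq (g : SL(2, ℂ)) : g 0 0 * g 1 1 - g 0 1 * g 1 0 = 1 := by
  rw [← det_fin_two]
  exact g.det_coe

theorem conj_apply_zero_one (g n : SL(2, ℂ)) : (g * n * g⁻¹) 0 1 =
    g 0 0 ^ 2 * n 0 1 - g 0 1 ^ 2 * n 1 0 + g 0 0 * g 0 1 * (n 1 1 - n 0 0) := by
  simp only [Matrix.SpecialLinearGroup.coe_mul, Matrix.SpecialLinearGroup.coe_inv,
    adjugate_fin_two, mul_apply, Fin.sum_univ_two, of_apply, cons_val', cons_val_zero,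
    cons_val_one, cons_val_fin_one]
  ring

theorem conj_apply_one_zero (g n : SL(2, ℂ)) : (g * n * g⁻¹) 1 0 =
    g 1 1 ^ 2 * n 1 0 - g 1 0 ^ 2 * n 0 1 + g 1 0 * g 1 1 * (n 0 0 - n 1 1) := by
  simp only [Matrix.SpecialLinearGroup.coe_mul, Matrix.SpecialLinearGroup.coe_inv,
    adjugate_fin_two, mul_apply, Fin.sum_univ_two, of_apply, cons_val', cons_val_zero,
    cons_val_one, cons_val_fin_one]
  ring

def IsMonomial (g : SL(2, ℂ)) : Prop := (g 0 1 = 0 ∧ g 1 0 = 0) ∨ (g 0 0 = 0 ∧ g 1 1 = 0)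

theorem mem_normalizer_Tdiag_iff : g ∈ normalizer Tdiag ↔ IsMonomial g := by
  have hdet := det_eq g
  rw [mem_set_normalizer_iff]
  constructor
  · intro hg
    let t : SL(2, ℂ) := ⟨!![2, 0; 0, 2⁻¹], by norm_num [det_fin_two_of]⟩
    obtain ⟨h01, h10⟩ := (hg t).1 ⟨rfl, rfl⟩
    have hab : g 0 0 = 0 ∨ g 0 1 = 0 := by
      rw [conj_apply_zero_one] at h01
      norm_num [t] at h01
      exact h01
    have hcd : g 1 0 = 0 ∨ g 1 1 = 0 := by
      rw [conj_apply_one_zero] at h10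
      norm_num [t] at h10
      exact h10
    rcases hab with ha | hb <;> rcases hcd with hc | hd
    · simp [ha, hc] at hdet
    · exact Or.inr ⟨ha, hd⟩
    · exact Or.inl ⟨hb, hc⟩
    · simp [hb, hd] at hdet
  · intro hg n
    simp only [Tdiag, Set.mem_ofPred_eq, conj_apply_zero_one, conj_apply_one_zero]
    rcases hg with ⟨h01, h10⟩ | ⟨h00, h11⟩
    · have ha : g 0 0 ≠ 0 := by rintro h; simp [h, h01] at hdet
      have hd : g 1 1 ≠ 0 := by rintro h; simp [h, h01] at hdet
      simp [h01, h10, ha, hd]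
    · have hb : g 0 1 ≠ 0 := by rintro h; simp [h, h00] at hdet
      have hc : g 1 0 ≠ 0 := by rintro h; simp [h, h00] at hdet
      simp [h00, h11, hb, hc, and_comm]

theorem gMat_not_mem_normalizer (α : ℂ) : gMat α ∉ normalizer Tdiag := by
  rw [mem_normalizer_Tdiag_iff]
  rintro (⟨-, h⟩ | ⟨h, -⟩) <;> simp [gMat] at h

/-- Constant on the double cosets `N g N`: multiplying by a monomial matrix rescales and
permutes the entries, by factors whose product is `det² = 1`. -/
def entryProd (g : SL(2, ℂ)) : ℂ := g 0 0 * g 0 1 * g 1 0 * g 1 1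

theorem entryProd_inv (g : SL(2, ℂ)) : entryProd g⁻¹ = entryProd g := by
  simp only [entryProd, Matrix.SpecialLinearGroup.coe_inv, adjugate_fin_two, of_apply, cons_val',
    cons_val_zero, cons_val_one, cons_val_fin_one]
  ring

theorem entryProd_mul_left (hn : n ∈ normalizer Tdiag) : entryProd (n * g) = entryProd g := by
  have hdet := det_eq n
  rw [mem_normalizer_Tdiag_iff] at hn
  rcases hn with ⟨h01, h10⟩ | ⟨h00, h11⟩
  · simp only [entryProd, Matrix.SpecialLinearGroup.coe_mul, mul_apply, Fin.sum_univ_two, h01, h10,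
      mul_zero, zero_mul, add_zero, zero_add, sub_zero] at hdet ⊢
    linear_combination g 0 0 * g 0 1 * g 1 0 * g 1 1 * (n 0 0 * n 1 1 + 1) * hdet
  · simp only [entryProd, Matrix.SpecialLinearGroup.coe_mul, mul_apply, Fin.sum_univ_two, h00, h11,
      mul_zero, zero_mul, add_zero, zero_add, zero_sub] at hdet ⊢
    linear_combination g 0 0 * g 0 1 * g 1 0 * g 1 1 * (1 - n 0 1 * n 1 0) * hdet

theorem entryProd_mul_right (hn : n ∈ normalizer Tdiag) : entryProd (g * n) = entryProd g := by
  rw [← entryProd_inv, _root_.mul_inv_rev, entryProd_mul_left (inv_mem hn), entryProd_inv]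

theorem entryProd_eq_of_mem_doubleCoset {a : SL(2, ℂ)}
    (hg : g ∈ doubleCoset a (normalizer Tdiag) (normalizer Tdiag)) :
    entryProd g = entryProd a := by
  obtain ⟨x, hx, y, hy, rfl⟩ := mem_doubleCoset.1 hg
  rw [entryProd_mul_right hy, entryProd_mul_left hx]

theorem entryProd_gMat (α : ℂ) : entryProd (gMat α) = α * (1 + α) := by
  simp [entryProd, gMat]

noncomputable def diagSL (x : ℂ) (hx : x ≠ 0) : SL(2, ℂ) :=
  ⟨!![x, 0; 0, x⁻¹], by simp [det_fin_two_of, hx]⟩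

def weyl : SL(2, ℂ) := ⟨!![0, 1; -1, 0], by simp [det_fin_two_of]⟩

theorem coe_diagSL (x : ℂ) (hx : x ≠ 0) :
    (diagSL x hx : Matrix (Fin 2) (Fin 2) ℂ) = !![x, 0; 0, x⁻¹] := rfl

theorem coe_weyl : (weyl : Matrix (Fin 2) (Fin 2) ℂ) = !![0, 1; -1, 0] := rfl

theorem coe_gMat (α : ℂ) : (gMat α : Matrix (Fin 2) (Fin 2) ℂ) = !![1, α; 1, 1 + α] := rfl

theorem diagSL_mem_normalizer (x : ℂ) (hx : x ≠ 0) : diagSL x hx ∈ normalizer Tdiag :=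
  mem_normalizer_Tdiag_iff.2 (Or.inl ⟨rfl, rfl⟩)

theorem weyl_mem_normalizer : weyl ∈ normalizer Tdiag :=
  mem_normalizer_Tdiag_iff.2 (Or.inr ⟨rfl, rfl⟩)

theorem mem_doubleCoset_gMat_of_ne_zero (ha : g 0 0 ≠ 0) (hc : g 1 0 ≠ 0) :
    g ∈ doubleCoset (gMat (g 0 1 * g 1 0)) (normalizer Tdiag) (normalizer Tdiag) := by
  have hdet := det_eq g
  obtain ⟨y, hy⟩ := IsAlgClosed.exists_eq_mul_self (g 0 0 * g 1 0)
  have hy0 : y ≠ 0 := by rintro rfl; simp [ha, hc] at hy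
  have hx0 : g 0 0 / y ≠ 0 := div_ne_zero ha hy0
  -- `g = diag(a / y, y / a) · g_{bc} · diag(y, 1 / y)` where `y² = a c`
  refine mem_doubleCoset.2 ⟨diagSL _ hx0, diagSL_mem_normalizer _ hx0, diagSL y hy0,
    diagSL_mem_normalizer y hy0, Matrix.SpecialLinearGroup.ext _ _ fun i j => ?_⟩
  simp only [Matrix.SpecialLinearGroup.coe_mul, coe_diagSL, coe_gMat, mul_fin_two]
  fin_cases i <;> fin_cases j <;>
    simp only [Fin.zero_eta, Fin.mk_one, of_apply, cons_val', cons_val_zero, cons_val_one,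
      cons_val_fin_one, mul_one, add_zero, zero_mul, mul_zero, zero_add, inv_div] <;>
    field_simp
  · linear_combination -g 0 1 * hy
  · linear_combination hy
  · linear_combination hdet

theorem exists_mem_doubleCoset_gMat (hg : g ∉ normalizer Tdiag) :
    ∃ β, g ∈ doubleCoset (gMat β) (normalizer Tdiag) (normalizer Tdiag) := by
  have hdet := det_eq g
  rw [mem_normalizer_Tdiag_iff, IsMonomial, not_or, not_and_or, not_and_or] at hg
  by_cases hac : g 0 0 ≠ 0 ∧ g 1 0 ≠ 0
  · exact ⟨_, mem_doubleCoset_gMat_of_ne_zero hac.1 hac.2⟩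
  have hbd : g 0 1 ≠ 0 ∧ g 1 1 ≠ 0 := by
    rw [not_and_or, not_not, not_not] at hac
    rcases hac with ha | hc
    · have hb : g 0 1 ≠ 0 := by rintro hb; simp [ha, hb] at hdet
      exact ⟨hb, hg.2.resolve_left (not_not.2 ha)⟩
    · have hd : g 1 1 ≠ 0 := by rintro hd; simp [hc, hd] at hdet
      exact ⟨hg.1.resolve_right (not_not.2 hc), hd⟩
  have hgw : (g * weyl) 0 0 ≠ 0 ∧ (g * weyl) 1 0 ≠ 0 := by
    simpa [coe_weyl, mul_apply, Fin.sum_univ_two] using hbd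
  have h := mem_doubleCoset_gMat_of_ne_zero hgw.1 hgw.2
  exact ⟨_, mem_doubleCoset_of_mul_mem (one_mem _) weyl_mem_normalizer (by rwa [one_mul])⟩

theorem gMat_mem_doubleCoset_gMat_neg_one_sub (β : ℂ) :
    gMat β ∈ doubleCoset (gMat (-1 - β)) (normalizer Tdiag) (normalizer Tdiag) := by
  have h := mem_doubleCoset_gMat_of_ne_zero (g := weyl * gMat β * 1)
    (by simp [coe_weyl, coe_gMat, mul_apply, Fin.sum_univ_two])
    (by simp [coe_weyl, coe_gMat, mul_apply, Fin.sum_univ_two])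
  have hprod : (weyl * gMat β * 1) 0 1 * (weyl * gMat β * 1) 1 0 = -1 - β := by
    simp only [mul_one, Matrix.SpecialLinearGroup.coe_mul, coe_weyl, coe_gMat, mul_apply, of_apply,
      cons_val', cons_val_zero, cons_val_one, cons_val_fin_one, Fin.sum_univ_two]
    ring
  rw [hprod] at h
  exact mem_doubleCoset_of_mul_mem weyl_mem_normalizer (one_mem _) h

end SL2

theorem mem_Kflat_or_neg_one_sub_mem_Kflat (z : ℂ) : z ∈ Kflat ∨ -1 - z ∈ Kflat := by
  simp only [Kflat, Set.mem_sdiff, Set.mem_ofPred_eq, not_and, not_lt, Complex.sub_re,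
    Complex.sub_im, Complex.neg_re, Complex.neg_im, Complex.one_re, Complex.one_im]
  rcases lt_trichotomy z.re (-(1 / 2)) with h | h | h
  · right
    constructor <;> intros <;> linarith
  · rcases le_or_gt 0 z.im with hi | hi
    · exact Or.inl ⟨h.ge, fun _ => hi⟩
    · right
      constructor <;> intros <;> linarith
  · exact Or.inl ⟨h.le, fun h' => absurd h' h.ne'⟩

theorem eq_of_mem_Kflat_of_mul_one_add_eq {α β : ℂ} (hα : α ∈ Kflat) (hβ : β ∈ Kflat)
    (h : α * (1 + α) = β * (1 + β)) : α = β := by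
  have hfac : (β - α) * (β - (-1 - α)) = 0 := by linear_combination -h
  rcases mul_eq_zero.1 hfac with h' | h'
  · exact (sub_eq_zero.1 h').symm
  · rw [sub_eq_zero.1 h'] at hβ ⊢
    simp only [Kflat, Set.mem_sdiff, Set.mem_ofPred_eq, not_and, not_lt, Complex.sub_re,
      Complex.sub_im, Complex.neg_re, Complex.neg_im, Complex.one_re, Complex.one_im] at hα hβ
    have hre : α.re = -(1 / 2) := by linarith [hα.1, hβ.1]
    have him : α.im = 0 := by linarith [hα.2 hre, hβ.2 (by linarith)]
    apply Complex.ext <;> norm_num [hre, him]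

theorem existsUnique_mem_Kflat_mem_doubleCoset {g : SL(2, ℂ)} (hg : g ∉ normalizer Tdiag) :
    ∃! α, α ∈ Kflat ∧ g ∈ doubleCoset (gMat α) (normalizer Tdiag) (normalizer Tdiag) := by
  obtain ⟨β, hβ⟩ := SL2.exists_mem_doubleCoset_gMat hg
  have hβ' : g ∈ doubleCoset (gMat (-1 - β)) (normalizer Tdiag) (normalizer Tdiag) := by
    rwa [← doubleCoset_eq_of_mem (SL2.gMat_mem_doubleCoset_gMat_neg_one_sub β)]
  refine existsUnique_of_exists_of_unique ?_ fun α α' ⟨hα, hgα⟩ ⟨hα', hgα'⟩ => ?_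
  · rcases mem_Kflat_or_neg_one_sub_mem_Kflat β with hK | hK
    exacts [⟨β, hK, hβ⟩, ⟨-1 - β, hK, hβ'⟩]
  · refine eq_of_mem_Kflat_of_mul_one_add_eq hα hα' ?_
    rw [← SL2.entryProd_gMat, ← SL2.entryProd_gMat, ← SL2.entryProd_eq_of_mem_doubleCoset hgα,
      SL2.entryProd_eq_of_mem_doubleCoset hgα']

/-- The pairs `(T,T)` and `(g_α T g_α⁻¹, T)`, `α ∈ 𝒦`, form a minimal set of
representatives of the orbits of pairs of maximal tori of `SL₂(ℂ)` under simultaneous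
conjugation. -/
theorem pairs_of_tori_reps (g₁ g₂ : SpecialLinearGroup (Fin 2) ℂ) :
    Xor'
      (∃ A : SpecialLinearGroup (Fin 2) ℂ,
        conjSet (A * g₁) Tdiag = Tdiag ∧ conjSet (A * g₂) Tdiag = Tdiag)
      (∃! α : ℂ, α ∈ Kflat ∧ ∃ A : SpecialLinearGroup (Fin 2) ℂ,
        conjSet (A * g₁) Tdiag = conjSet (gMat α) Tdiag ∧
        conjSet (A * g₂) Tdiag = Tdiag) := by
  simp only [exists_conjSet_eq_self_iff, exists_conjSet_eq_conjSet_iff]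
  by_cases hg : g₂⁻¹ * g₁ ∈ normalizer Tdiag
  · exact Or.inl ⟨hg, fun ⟨α, ⟨_, hα⟩, _⟩ =>
      SL2.gMat_not_mem_normalizer α (mem_of_mem_doubleCoset_of_mem hg hα)⟩
  · exact Or.inr ⟨existsUnique_mem_Kflat_mem_doubleCoset hg, hg⟩
end

section
/- Let K be an algebraically closed field and let s, r ∈ K with s ≠ 0, r ≠ 0, s² ≠ 1, r² ≠ 1; set t = diag(s, s⁻¹), t' = diag(r, r⁻¹), Δ = s − s⁻¹, Δ' = r − r⁻¹, and X_α = [[s + αΔ, −αΔ],[(1+α)Δ, s⁻¹ − αΔ]]. Then for every α ∈ K with α ≠ 0 and α ≠ −1, the SL₂(K)-orbit of the pair (X_α, t') equals the set {(X, Y) : X is SL₂(K)-conjugate to t, Y is SL₂(K)-conjugate to t', and trace(X·Y) = s·r + s⁻¹·r⁻¹ + α·Δ·Δ'}. In particular this orbit is Zariski closed in C_t × C_{t'}. -/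
open Matrix

/-- `diag(s, s⁻¹) ∈ SL₂(K)` for `s ≠ 0`. -/
def diagSL {K : Type*} [Field K] (s : K) (hs : s ≠ 0) : SpecialLinearGroup (Fin 2) K :=
  ⟨!![s, 0; 0, s⁻¹], by rw [Matrix.det_fin_two_of]; field_simp; norm_num⟩

/-- `X_α = [[s + αΔ, -αΔ],[(1+α)Δ, s⁻¹ - αΔ]] ∈ SL₂(K)` where `Δ = s - s⁻¹`. -/
def Xa {K : Type*} [Field K] (s : K) (hs : s ≠ 0) (α : K) :
    SpecialLinearGroup (Fin 2) K :=
  ⟨!![s + α * (s - s⁻¹), -(α * (s - s⁻¹));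
      (1 + α) * (s - s⁻¹), s⁻¹ - α * (s - s⁻¹)], by
    rw [Matrix.det_fin_two_of]; field_simp; ring⟩

/-- The `SL₂(K)`-orbit of the pair `(P, Q)` under simultaneous conjugation. -/
def pairOrbit {K : Type*} [Field K] (P Q : SpecialLinearGroup (Fin 2) K) :
    Set (SpecialLinearGroup (Fin 2) K × SpecialLinearGroup (Fin 2) K) :=
  {pq | ∃ A : SpecialLinearGroup (Fin 2) K, pq = (A * P * A⁻¹, A * Q * A⁻¹)}

/-! For `Y = A t' A⁻¹` put `Z = A⁻¹ X A`. Because `r² ≠ 1`, the traces of `Z` and `Z t'` pin down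
the diagonal of `Z` to that of `X_α`, and `det Z = 1` then fixes the product of the off-diagonal
entries at `-α(1+α)Δ² ≠ 0`. Conjugation by `diag(λ, λ⁻¹)` centralizes `t'` and multiplies the
off-diagonal entries by `λ²` and `λ⁻²`, so a square root in `K` carries `Z` to `X_α`. Conversely
`X_α` is conjugate to `t` by the matrix `[[1, α], [1, 1 + α]]` of its eigenvectors, and traces are
conjugation invariant. -/

namespace Matrix.SpecialLinearGroup

variable {n R : Type*} [Fintype n] [DecidableEq n] [CommRing R]

theorem trace_coe_conj (A P : SpecialLinearGroup n R) :
    trace ((A * P * A⁻¹ : SpecialLinearGroup n R) : Matrix n n R) = trace (P : Matrix n n R) := by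
  rw [coe_mul, coe_mul, trace_mul_cycle, ← coe_mul, inv_mul_cancel, coe_one, one_mul]

end Matrix.SpecialLinearGroup

open Matrix.SpecialLinearGroup

section

variable {K : Type*} [Field K]

theorem sub_inv_ne_zero_of_sq_ne_one {x : K} (hx : x ≠ 0) (hx2 : x ^ 2 ≠ 1) :
    x - x⁻¹ ≠ 0 := by
  intro h
  apply hx2
  field_simp at h
  linear_combination h

theorem coe_diagSL (s : K) (hs : s ≠ 0) :
    (diagSL s hs : Matrix (Fin 2) (Fin 2) K) = !![s, 0; 0, s⁻¹] := rfl

theorem diagSL_mul_comm (a b : K) (ha : a ≠ 0) (hb : b ≠ 0) :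
    diagSL a ha * diagSL b hb = diagSL b hb * diagSL a ha := by
  apply Subtype.ext
  simp [coe_mul, coe_diagSL, mul_comm]

theorem coe_diagSL_conj (l : K) (hl : l ≠ 0) (P : SpecialLinearGroup (Fin 2) K) :
    ((diagSL l hl * P * (diagSL l hl)⁻¹ : SpecialLinearGroup (Fin 2) K) :
      Matrix (Fin 2) (Fin 2) K) = !![P 0 0, l ^ 2 * P 0 1; P 1 0 / l ^ 2, P 1 1] := by
  rw [coe_mul, coe_mul, coe_inv, coe_diagSL, adjugate_fin_two_of, eta_fin_two (P : Matrix _ _ K),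
    mul_fin_two, mul_fin_two]
  ext i j
  fin_cases i <;> fin_cases j <;> simp [field]

theorem exists_diagSL_conj_of_diag_eq [IsAlgClosed K] {M N : SpecialLinearGroup (Fin 2) K}
    (h00 : M 0 0 = N 0 0) (h11 : M 1 1 = N 1 1) (h01 : N 0 1 ≠ 0) (h10 : N 1 0 ≠ 0) :
    ∃ (l : K) (hl : l ≠ 0), M = diagSL l hl * N * (diagSL l hl)⁻¹ := by
  have hoff : M 0 1 * M 1 0 = N 0 1 * N 1 0 := by
    have hM := M.det_coe
    have hN := N.det_coe
    rw [det_fin_two] at hM hN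
    rw [h00, h11] at hM
    linear_combination hN - hM
  have hM01 : M 0 1 ≠ 0 := left_ne_zero_of_mul (hoff ▸ mul_ne_zero h01 h10)
  obtain ⟨l, hl2⟩ := IsAlgClosed.exists_pow_nat_eq (M 0 1 / N 0 1) two_pos
  have hl : l ≠ 0 := ne_zero_pow two_ne_zero (hl2 ▸ div_ne_zero hM01 h01)
  have hM10 : N 1 0 / (M 0 1 / N 0 1) = M 1 0 := by
    field_simp
    linear_combination -hoff
  refine ⟨l, hl, Subtype.ext ?_⟩
  rw [coe_diagSL_conj, hl2, div_mul_cancel₀ _ h01, hM10, ← h00, ← h11]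
  exact eta_fin_two _

theorem diag_eq_of_trace_eq_of_trace_mul_diag_eq {r : K} (hr : r ≠ 0) (hr2 : r ^ 2 ≠ 1)
    {M N : Matrix (Fin 2) (Fin 2) K} (htr : trace M = trace N)
    (htr' : trace (M * !![r, 0; 0, r⁻¹]) = trace (N * !![r, 0; 0, r⁻¹])) :
    M 0 0 = N 0 0 ∧ M 1 1 = N 1 1 := by
  have h1 : M 0 0 + M 1 1 = N 0 0 + N 1 1 := by simpa [trace_fin_two] using htr
  have h2 : M 0 0 * r + M 1 1 * r⁻¹ = N 0 0 * r + N 1 1 * r⁻¹ := by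
    simpa [trace_fin_two, mul_apply, Fin.sum_univ_two] using htr'
  have hdiff : (M 0 0 - N 0 0) * (r - r⁻¹) = 0 := by linear_combination h2 - r⁻¹ * h1
  have h00 : M 0 0 = N 0 0 := sub_eq_zero.mp <|
    (mul_eq_zero.mp hdiff).resolve_right (sub_inv_ne_zero_of_sq_ne_one hr hr2)
  exact ⟨h00, by linear_combination h1 - h00⟩

theorem conj_mem_pairOrbit {P Q : SpecialLinearGroup (Fin 2) K}
    {pq : SpecialLinearGroup (Fin 2) K × SpecialLinearGroup (Fin 2) K}
    (A : SpecialLinearGroup (Fin 2) K)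
    (h : pq ∈ pairOrbit P Q) : (A * pq.1 * A⁻¹, A * pq.2 * A⁻¹) ∈ pairOrbit P Q := by
  obtain ⟨B, rfl⟩ := h
  exact ⟨A * B, by simp only [Prod.mk.injEq]; constructor <;> group⟩

def eigenbasisXa (α : K) : SpecialLinearGroup (Fin 2) K :=
  ⟨!![1, α; 1, 1 + α], by rw [det_fin_two_of]; ring⟩

theorem Xa_eq_conj_diagSL (s : K) (hs : s ≠ 0) (α : K) :
    Xa s hs α = eigenbasisXa α * diagSL s hs * (eigenbasisXa α)⁻¹ := by
  ext i j
  rw [coe_mul, coe_mul, coe_inv, coe_diagSL, eigenbasisXa, adjugate_fin_two_of, mul_fin_two,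
    mul_fin_two]
  fin_cases i <;> fin_cases j <;> simp [Xa] <;> ring

theorem trace_Xa (s : K) (hs : s ≠ 0) (α : K) :
    trace (Xa s hs α : Matrix (Fin 2) (Fin 2) K) = s + s⁻¹ := by
  simp [Xa, trace_fin_two]

theorem trace_Xa_mul_diagSL (s r : K) (hs : s ≠ 0) (hr : r ≠ 0) (α : K) :
    trace ((Xa s hs α : Matrix (Fin 2) (Fin 2) K) * (diagSL r hr : Matrix (Fin 2) (Fin 2) K)) =
      s * r + s⁻¹ * r⁻¹ + α * (s - s⁻¹) * (r - r⁻¹) := by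
  rw [coe_diagSL, Xa, mul_fin_two, trace_fin_two_of]
  ring

theorem mem_pairOrbit_Xa_of_trace [IsAlgClosed K] {s r α : K} (hs : s ≠ 0) (hr : r ≠ 0)
    (hs2 : s ^ 2 ≠ 1) (hr2 : r ^ 2 ≠ 1) (hα0 : α ≠ 0) (hα1 : α ≠ -1)
    {Z : SpecialLinearGroup (Fin 2) K} (htr : trace (Z : Matrix (Fin 2) (Fin 2) K) = s + s⁻¹)
    (htr' : trace ((Z : Matrix (Fin 2) (Fin 2) K) * (diagSL r hr : Matrix (Fin 2) (Fin 2) K)) =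
      s * r + s⁻¹ * r⁻¹ + α * (s - s⁻¹) * (r - r⁻¹)) :
    (Z, diagSL r hr) ∈ pairOrbit (Xa s hs α) (diagSL r hr) := by
  have hΔ := sub_inv_ne_zero_of_sq_ne_one hs hs2
  obtain ⟨h00, h11⟩ := diag_eq_of_trace_eq_of_trace_mul_diag_eq hr hr2
    (htr.trans (trace_Xa s hs α).symm) (htr'.trans (trace_Xa_mul_diagSL s r hs hr α).symm)
  obtain ⟨l, hl, hZ⟩ := exists_diagSL_conj_of_diag_eq h00 h11
    (by simpa [Xa] using ⟨hα0, hΔ⟩)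
    (by simpa [Xa, add_eq_zero_iff_eq_neg'] using ⟨hα1, hΔ⟩)
  refine ⟨diagSL l hl, Prod.ext hZ ?_⟩
  rw [diagSL_mul_comm, mul_inv_cancel_right]

end

/-- For `α ≠ 0, -1`, the orbit of `(X_α, t')` is exactly the set of pairs `(X, Y)` with
`X ∼ t`, `Y ∼ t'` and `tr(XY) = sr + s⁻¹r⁻¹ + αΔΔ'`. -/
theorem orbit_eq_trace_fiber {K : Type*} [Field K] [IsAlgClosed K]
    (s r : K) (hs : s ≠ 0) (hr : r ≠ 0) (hs2 : s ^ 2 ≠ 1) (hr2 : r ^ 2 ≠ 1)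
    (α : K) (hα0 : α ≠ 0) (hα1 : α ≠ -1) :
    pairOrbit (Xa s hs α) (diagSL r hr) =
      {pq : SpecialLinearGroup (Fin 2) K × SpecialLinearGroup (Fin 2) K |
        (∃ A : SpecialLinearGroup (Fin 2) K, pq.1 = A * diagSL s hs * A⁻¹) ∧
        (∃ A : SpecialLinearGroup (Fin 2) K, pq.2 = A * diagSL r hr * A⁻¹) ∧
        Matrix.trace ((pq.1 : Matrix (Fin 2) (Fin 2) K) * (pq.2 : Matrix (Fin 2) (Fin 2) K)) =
          s * r + s⁻¹ * r⁻¹ + α * (s - s⁻¹) * (r - r⁻¹)} := by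
  ext ⟨X, Y⟩
  constructor
  · rintro ⟨A, hXY⟩
    obtain ⟨rfl, rfl⟩ := Prod.mk.inj hXY
    refine ⟨⟨A * eigenbasisXa α, by rw [Xa_eq_conj_diagSL]; group⟩, ⟨A, rfl⟩, ?_⟩
    rw [← coe_mul, show A * Xa s hs α * A⁻¹ * (A * diagSL r hr * A⁻¹) =
      A * (Xa s hs α * diagSL r hr) * A⁻¹ by group, trace_coe_conj, coe_mul, trace_Xa_mul_diagSL]
  · rintro ⟨⟨A₁, rfl⟩, ⟨A₂, rfl⟩, htr⟩
    set X := A₁ * diagSL s hs * A₁⁻¹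
    have hmem := mem_pairOrbit_Xa_of_trace hs hr hs2 hr2 hα0 hα1 (Z := A₂⁻¹ * X * A₂) ?_ ?_
    · convert conj_mem_pairOrbit A₂ hmem using 2
      group
    · rw [show A₂⁻¹ * X * A₂ = (A₂⁻¹ * A₁) * diagSL s hs * (A₂⁻¹ * A₁)⁻¹ by simp only [X]; group,
        trace_coe_conj, coe_diagSL, trace_fin_two_of]
    · rw [← coe_mul, show A₂⁻¹ * X * A₂ * diagSL r hr =
          A₂⁻¹ * (X * (A₂ * diagSL r hr * A₂⁻¹)) * A₂⁻¹⁻¹ by group, trace_coe_conj, coe_mul]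
      exact htr
end
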